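/- The algebra 𝔠₇₇ on ℂ⁵ with nonzero basis products e₁e₁ = e₂, e₁e₂ = e₄, e₁e₄ = e₅, e₂e₃ = e₅, e₃e₃ = e₄ is a nilpotent commutative algebra (A⁶ = 0) that satisfies the almost-Jordan identity 2·(((y·x)·x)·x) + y·((x·x)·x) = 3·((y·(x·x))·x) for all x, y, but does not satisfy the Jordan identity: there exist x, y with ((x·x)·y)·x ≠ (x·x)·(y·x). -/

import Mathlib

/-- `IsProdOf μ n z` says that `z` is a product of `n` elements under the
multiplication `μ`, with some arrangement of parentheses. -/
inductive IsProdOf {V : Type*} (μ : V → V → V) : ℕ → V → Prop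
  | base (x : V) : IsProdOf μ 1 x
  | mul {m n : ℕ} {a b : V} :
      IsProdOf μ m a → IsProdOf μ n b → IsProdOf μ (m + n) (μ a b)

/-- Structure constants of the algebra 𝔠₇₇ (e₁e₁ = e₂, e₁e₂ = e₄, e₁e₄ = e₅, e₂e₃ = e₅, e₃e₃ = e₄) on ℂ⁵ (basis `e₁, …, e₅` indexed by `Fin 5`),
extended symmetrically; unlisted products of basis vectors are zero. -/
noncomputable def tbl77 : Fin 5 → Fin 5 → Fin 5 → ℂ :=
  ![![![0,1,0,0,0], ![0,0,0,1,0], 0, ![0,0,0,0,1], 0],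
    ![![0,0,0,1,0], 0, ![0,0,0,0,1], 0, 0],
    ![0, ![0,0,0,0,1], ![0,0,0,1,0], 0, 0],
    ![![0,0,0,0,1], 0, 0, 0, 0],
    0]

/-- The bilinear multiplication of the algebra on ℂ⁵. -/
noncomputable def mul77 (x y : Fin 5 → ℂ) : Fin 5 → ℂ :=
  fun k => ∑ i, ∑ j, x i * y j * tbl77 i j k

/-!
Commutativity is the symmetry of the structure constants. For nilpotency, give the basis
vectors `e₁, e₃, e₂, e₄, e₅` the weights `1, 2, 3, 4, 5`: every nonzero product `eᵢeⱼ = eₖ` of the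
table has `w i + w j ≤ w k`, so a product of `n` elements lies in the span of the basis vectors of
weight at least `n`, which is zero for `n = 6`.
-/

theorem IsProdOf.mem_of_mul_mem {V : Type*} {μ : V → V → V} {F : ℕ → Set V}
    (h_one : ∀ x, x ∈ F 1) (h_mul : ∀ {m n a b}, a ∈ F m → b ∈ F n → μ a b ∈ F (m + n))
    {n : ℕ} {z : V} (h : IsProdOf μ n z) : z ∈ F n := by
  induction h with
  | base x => exact h_one x
  | mul _ _ iha ihb => exact h_mul iha ihb

section TableMul

variable {ι R : Type*} [Fintype ι]

/-- The multiplication on `ι → R` with structure constants `T i j k` (`eᵢeⱼ = ∑ₖ T i j k • eₖ`). -/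
def tableMul [Semiring R] (T : ι → ι → ι → R) (x y : ι → R) : ι → R :=
  fun k => ∑ i, ∑ j, x i * y j * T i j k

theorem tableMul_comm [CommSemiring R] {T : ι → ι → ι → R} (hT : ∀ i j, T i j = T j i)
    (x y : ι → R) : tableMul T x y = tableMul T y x := by
  funext k
  rw [tableMul, tableMul, Finset.sum_comm]
  refine Finset.sum_congr rfl fun i _ => Finset.sum_congr rfl fun j _ => ?_
  rw [hT, mul_comm (x j)]

theorem IsProdOf.tableMul_apply_eq_zero [Semiring R] {T : ι → ι → ι → R}
    (w : ι → ℕ) (hw : ∀ k, 0 < w k)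
    (hT : ∀ i j k, w k < w i + w j → T i j k = 0)
    {n : ℕ} {z : ι → R} (h : IsProdOf (tableMul T) n z) : ∀ k, w k < n → z k = 0 := by
  refine h.mem_of_mul_mem (F := fun n => {z | ∀ k, w k < n → z k = 0}) ?_ ?_
  · intro x k hk
    have := hw k
    omega
  · intro m n a b ha hb k hk
    refine Finset.sum_eq_zero fun i _ => Finset.sum_eq_zero fun j _ => ?_
    by_cases hij : w k < w i + w j
    · rw [hT i j k hij, mul_zero]
    · rcases lt_or_ge (w i) m with him | him
      · rw [ha i him, zero_mul, zero_mul]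
      · rw [hb j (by omega), mul_zero, zero_mul]

end TableMul

theorem tbl77_symm (i j : Fin 5) : tbl77 i j = tbl77 j i := by
  fin_cases i <;> fin_cases j <;> rfl

def weight77 : Fin 5 → ℕ := ![1, 3, 2, 4, 5]

theorem tbl77_eq_zero_of_lt_weight (i j k : Fin 5) (h : weight77 k < weight77 i + weight77 j) :
    tbl77 i j k = 0 := by
  fin_cases i <;> fin_cases j <;> fin_cases k <;> simp_all [tbl77, weight77]

theorem mul77_apply (x y : Fin 5 → ℂ) :
    mul77 x y = ![0, x 0 * y 0, 0, x 0 * y 1 + x 1 * y 0 + x 2 * y 2,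
      x 0 * y 3 + x 3 * y 0 + x 1 * y 2 + x 2 * y 1] := by
  funext k
  fin_cases k <;> simp [mul77, tbl77, Fin.sum_univ_five]
  all_goals ring

theorem c77_properties :
    (∀ x y : Fin 5 → ℂ, mul77 x y = mul77 y x) ∧
    (∀ z : Fin 5 → ℂ, IsProdOf (mul77) 6 z → z = 0) ∧
    (∀ x y : Fin 5 → ℂ,
        (2 : ℂ) • mul77 (mul77 (mul77 y x) x) x + mul77 y (mul77 (mul77 x x) x) =
          (3 : ℂ) • mul77 (mul77 y (mul77 x x)) x) ∧
    (∃ x y : Fin 5 → ℂ,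
        mul77 (mul77 (mul77 x x) y) x ≠ mul77 (mul77 x x) (mul77 y x)) := by
  refine ⟨tableMul_comm tbl77_symm, ?_, ?_, ?_⟩
  · intro z hz
    have hw : ∀ k, 0 < weight77 k := by decide
    have hw6 : ∀ k, weight77 k < 6 := by decide
    funext k
    exact hz.tableMul_apply_eq_zero weight77 hw tbl77_eq_zero_of_lt_weight k (hw6 k)
  · intro x y
    funext k
    fin_cases k <;> simp [mul77_apply]
    all_goals ring
  -- For `x = y = e₁`: `((e₁e₁)e₁)e₁ = e₅` but `(e₁e₁)(e₁e₁) = e₂e₂ = 0`.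
  · refine ⟨Pi.single 0 1, Pi.single 0 1, fun h => ?_⟩
    simpa [mul77_apply] using congrFun h 4
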